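/- There exist real numbers c₂, c₃ and nonzero real numbers α₂, α₃ such that t₁ + c₂n₁ = α₂n₂ and t₁ + c₃n₁ = α₃n₃. Moreover, the affine vector field g := (t₁ + c₂n₁)·λ₃ + (t₁ + c₃n₁)·λ₂ then satisfies: g(x) = t₁ + (c₂λ₃(x) + c₃λ₂(x))·n₁ for all x ∈ e₁; g(x) = α₂·λ₃(x)·n₂ for all x ∈ e₂; and g(x) = α₃·λ₂(x)·n₃ for all x ∈ e₃. In particular, for any function v : T → ℝ² satisfying v·n_j = 0 on e_j for j = 1,2,3, the scalar function w := g·v equals v·t₁ on e₁ and vanishes on e₂ and e₃. -/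
import Mathlib


open Matrix

noncomputable section

private lemma onb_expand (u w v : Fin 2 → ℝ) (hu : u ⬝ᵥ u = 1) (hw : w ⬝ᵥ w = 1)
    (huw : u ⬝ᵥ w = 0) : v = (v ⬝ᵥ u) • u + (v ⬝ᵥ w) • w := by
  simp only [dotProduct, Fin.sum_univ_two] at *
  have h1 : u 0 ^ 2 + w 0 ^ 2 = 1 := by
    have hprod : (u 0 * u 0 + u 1 * u 1 - 1) * (w 0 * w 0 + w 1 * w 1 - 1) = 0 := by
      rw [hu, hw]; ring
    linear_combination (u 0 * w 0 - u 1 * w 1) * huw + w 1 ^ 2 * hu + u 1 ^ 2 * hw - hprod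
  have h2 : u 0 * u 1 + w 0 * w 1 = 0 := by
    linear_combination (w 0 * u 1 + w 1 * u 0) * huw - w 0 * w 1 * hu +
      (w 0 * w 1 - (u 0 * u 1 + w 0 * w 1)) * hw
  funext i
  fin_cases i <;>
    simp only [Fin.zero_eta, Fin.mk_one, Pi.add_apply, Pi.smul_apply, smul_eq_mul]
  · linear_combination (-(v 0)) * h1 + (-(v 1)) * h2
  · linear_combination (-(v 1)) * (hu + hw - h1) + (-(v 0)) * h2

private lemma affine_comb (f : (Fin 2 → ℝ) → ℝ)
    (hf : ∃ (g : Fin 2 → ℝ) (c : ℝ), ∀ y, f y = g ⬝ᵥ y + c)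
    (a b : ℝ) (hab : a + b = 1) (p q : Fin 2 → ℝ) :
    f (a • p + b • q) = a * f p + b * f q := by
  obtain ⟨g, c, h⟩ := hf
  simp only [h, dotProduct_add, dotProduct_smul, smul_eq_mul]
  linear_combination (-c) * hab


/-- `n i` is the outward unit normal on the edge `e_i = [x_{i+1}, x_{i+2}]`. -/
def IsOuterNormal (x n : Fin 3 → Fin 2 → ℝ) : Prop :=
  ∀ i : Fin 3, n i ⬝ᵥ n i = 1 ∧ n i ⬝ᵥ (x (i + 2) - x (i + 1)) = 0 ∧
    0 < n i ⬝ᵥ (x (i + 1) - x i)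

/-- Construction of the auxiliary affine vector field `g = (t₁+c₂n₁)λ₃ + (t₁+c₃n₁)λ₂`
used to localize tangential traces: there are constants `c₂, c₃` and nonzero `α₂, α₃`
with `t₁ + c₂n₁ = α₂n₂` and `t₁ + c₃n₁ = α₃n₃`; the field `g` equals
`t₁ + (c₂λ₃ + c₃λ₂)n₁` on `e₁`, `α₂λ₃n₂` on `e₂` and `α₃λ₂n₃` on `e₃`; hence, for any
`v` with `v·n_j = 0` on `e_j` (j = 1,2,3), the scalar function `w = g·v` equals `v·t₁`
on `e₁` and vanishes on `e₂` and `e₃`.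
(Indices are 0-based: `t₁ = t 0`, `n_j = n (j-1)`, `λ_j = lam (j-1)`,
`e₁ = [x 1, x 2]`, `e₂ = [x 2, x 0]`, `e₃ = [x 0, x 1]`.) -/
theorem tangential_localization
    (x t n : Fin 3 → Fin 2 → ℝ)
    (hx : AffineIndependent ℝ x)
    (hn : IsOuterNormal x n)
    (ht_unit : ∀ i, t i ⬝ᵥ t i = 1)
    (ht_par : ∀ i, ∃ c : ℝ, x (i + 2) - x (i + 1) = c • t i)
    (lam : Fin 3 → (Fin 2 → ℝ) → ℝ)
    (hlam_affine : ∀ i, ∃ (g : Fin 2 → ℝ) (c : ℝ), ∀ y, lam i y = g ⬝ᵥ y + c)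
    (hlam_val : ∀ i j, lam i (x j) = if i = j then (1 : ℝ) else 0) :
    ∃ c2 c3 α2 α3 : ℝ, α2 ≠ 0 ∧ α3 ≠ 0 ∧
      t 0 + c2 • n 0 = α2 • n 1 ∧ t 0 + c3 • n 0 = α3 • n 2 ∧
      ∀ g : (Fin 2 → ℝ) → Fin 2 → ℝ,
        (∀ y, g y = lam 2 y • (t 0 + c2 • n 0) + lam 1 y • (t 0 + c3 • n 0)) →
        (∀ y ∈ segment ℝ (x 1) (x 2),
          g y = t 0 + (c2 * lam 2 y + c3 * lam 1 y) • n 0) ∧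
        (∀ y ∈ segment ℝ (x 2) (x 0), g y = (α2 * lam 2 y) • n 1) ∧
        (∀ y ∈ segment ℝ (x 0) (x 1), g y = (α3 * lam 1 y) • n 2) ∧
        (∀ v : (Fin 2 → ℝ) → Fin 2 → ℝ,
          (∀ y ∈ segment ℝ (x 1) (x 2), v y ⬝ᵥ n 0 = 0) →
          (∀ y ∈ segment ℝ (x 2) (x 0), v y ⬝ᵥ n 1 = 0) →
          (∀ y ∈ segment ℝ (x 0) (x 1), v y ⬝ᵥ n 2 = 0) →
          (∀ y ∈ segment ℝ (x 1) (x 2), g y ⬝ᵥ v y = v y ⬝ᵥ t 0) ∧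
          (∀ y ∈ segment ℝ (x 2) (x 0), g y ⬝ᵥ v y = 0) ∧
          (∀ y ∈ segment ℝ (x 0) (x 1), g y ⬝ᵥ v y = 0)) := by
  -- basic index normalization
  have e01 : (0 : Fin 3) + 1 = 1 := by decide
  have e02 : (0 : Fin 3) + 2 = 2 := by decide
  have e11 : (1 : Fin 3) + 1 = 2 := by decide
  have e12 : (1 : Fin 3) + 2 = 0 := by decide
  have e21 : (2 : Fin 3) + 1 = 0 := by decide
  have e22 : (2 : Fin 3) + 2 = 1 := by decide
  obtain ⟨hn0u, hn0e, hn0p⟩ := hn 0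
  obtain ⟨hn1u, hn1e, hn1p⟩ := hn 1
  obtain ⟨hn2u, hn2e, hn2p⟩ := hn 2
  simp only [e01, e02] at hn0e hn0p
  simp only [e11, e12] at hn1e hn1p
  simp only [e21, e22] at hn2e hn2p
  obtain ⟨c, hc⟩ := ht_par 0
  rw [e01, e02] at hc
  have hx12 : x 1 ≠ x 2 := by
    intro h
    have := hx.injective h
    simp at this
  have hcne : c ≠ 0 := by
    intro h
    rw [h, zero_smul, sub_eq_zero] at hc
    exact hx12 hc.symm
  have htn0 : t 0 ⬝ᵥ n 0 = 0 := by
    have h : n 0 ⬝ᵥ (c • t 0) = 0 := by rw [← hc]; exact hn0e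
    rw [dotProduct_smul, smul_eq_mul] at h
    rw [dotProduct_comm]
    exact (mul_eq_zero.mp h).resolve_left hcne
  have hn0t : n 0 ⬝ᵥ t 0 = 0 := by rw [dotProduct_comm]; exact htn0
  -- expansion of n 1 and n 2 in the basis (t 0, n 0)
  have hexp1 : n 1 = (n 1 ⬝ᵥ t 0) • t 0 + (n 1 ⬝ᵥ n 0) • n 0 :=
    onb_expand (t 0) (n 0) (n 1) (ht_unit 0) hn0u htn0
  have hexp2 : n 2 = (n 2 ⬝ᵥ t 0) • t 0 + (n 2 ⬝ᵥ n 0) • n 0 :=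
    onb_expand (t 0) (n 0) (n 2) (ht_unit 0) hn0u htn0
  set a2 := n 1 ⬝ᵥ t 0 with ha2
  set b2 := n 1 ⬝ᵥ n 0 with hb2
  set a3 := n 2 ⬝ᵥ t 0 with ha3
  set b3 := n 2 ⬝ᵥ n 0 with hb3
  have ht0e : t 0 ⬝ᵥ (x 2 - x 1) = c := by
    rw [hc, dotProduct_smul, smul_eq_mul, ht_unit 0, mul_one]
  have ha2ne : a2 ≠ 0 := by
    intro h
    rw [h, zero_smul, zero_add] at hexp1
    rw [hexp1, smul_dotProduct, smul_eq_mul, hn0e, mul_zero] at hn1p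
    exact lt_irrefl 0 hn1p
  have ha3ne : a3 ≠ 0 := by
    intro h
    rw [h, zero_smul, zero_add] at hexp2
    have h1 : n 2 ⬝ᵥ (x 2 - x 1) = 0 := by
      rw [hexp2, smul_dotProduct, smul_eq_mul, hn0e, mul_zero]
    have h2 : n 2 ⬝ᵥ (x 0 - x 2) = 0 := by
      have := dotProduct_add (n 2) (x 1 - x 0) (x 2 - x 1)
      have h3 : (x 1 - x 0) + (x 2 - x 1) = x 2 - x 0 := by abel
      rw [h3, hn2e, h1, add_zero] at this
      have h4 : x 0 - x 2 = -(x 2 - x 0) := by abel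
      rw [h4, dotProduct_neg, this, neg_zero]
    rw [h2] at hn2p
    exact lt_irrefl 0 hn2p
  have hA2 : t 0 + (b2 / a2) • n 0 = a2⁻¹ • n 1 := by
    rw [hexp1, smul_add, smul_smul, smul_smul, inv_mul_cancel₀ ha2ne, one_smul]
    congr 1
    rw [div_eq_inv_mul]
  have hA3 : t 0 + (b3 / a3) • n 0 = a3⁻¹ • n 2 := by
    rw [hexp2, smul_add, smul_smul, smul_smul, inv_mul_cancel₀ ha3ne, one_smul]
    congr 1
    rw [div_eq_inv_mul]
  refine ⟨b2 / a2, b3 / a3, a2⁻¹, a3⁻¹, inv_ne_zero ha2ne, inv_ne_zero ha3ne, hA2, hA3, ?_⟩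
  intro g hg
  -- barycentric coordinates along segments
  have lam_seg : ∀ (p q : Fin 3), ∀ y ∈ segment ℝ (x p) (x q),
      ∃ a b : ℝ, a + b = 1 ∧ ∀ i, lam i y = a * lam i (x p) + b * lam i (x q) := by
    intro p q y hy
    obtain ⟨a, b, _, _, hab, hy⟩ := hy
    exact ⟨a, b, hab, fun i => by rw [← hy]; exact affine_comb _ (hlam_affine i) a b hab _ _⟩
  have lam_e1 : ∀ y ∈ segment ℝ (x 1) (x 2), lam 1 y + lam 2 y = 1 := by
    intro y hy
    obtain ⟨a, b, hab, h⟩ := lam_seg 1 2 y hy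
    rw [h 1, h 2, hlam_val, hlam_val, hlam_val, hlam_val]
    simp
    linarith
  have lam_e2 : ∀ y ∈ segment ℝ (x 2) (x 0), lam 1 y = 0 := by
    intro y hy
    obtain ⟨a, b, hab, h⟩ := lam_seg 2 0 y hy
    rw [h 1, hlam_val, hlam_val]
    simp
  have lam_e3 : ∀ y ∈ segment ℝ (x 0) (x 1), lam 2 y = 0 := by
    intro y hy
    obtain ⟨a, b, hab, h⟩ := lam_seg 0 1 y hy
    rw [h 2, hlam_val, hlam_val]
    simp
  -- the three identities for g
  have hg1 : ∀ y ∈ segment ℝ (x 1) (x 2),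
      g y = t 0 + (b2 / a2 * lam 2 y + b3 / a3 * lam 1 y) • n 0 := by
    intro y hy
    have h1 := lam_e1 y hy
    rw [hg y]
    funext i
    simp only [Pi.add_apply, Pi.smul_apply, smul_eq_mul]
    linear_combination t 0 i * h1
  have hg2 : ∀ y ∈ segment ℝ (x 2) (x 0), g y = (a2⁻¹ * lam 2 y) • n 1 := by
    intro y hy
    rw [hg y, lam_e2 y hy, zero_smul, add_zero, hA2, smul_smul, mul_comm]
  have hg3 : ∀ y ∈ segment ℝ (x 0) (x 1), g y = (a3⁻¹ * lam 1 y) • n 2 := by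
    intro y hy
    rw [hg y, lam_e3 y hy, zero_smul, zero_add, hA3, smul_smul, mul_comm]
  refine ⟨hg1, hg2, hg3, ?_⟩
  intro v hv1 hv2 hv3
  refine ⟨?_, ?_, ?_⟩
  · intro y hy
    rw [hg1 y hy, add_dotProduct, smul_dotProduct, smul_eq_mul, dotProduct_comm (n 0),
      hv1 y hy, mul_zero, add_zero, dotProduct_comm]
  · intro y hy
    rw [hg2 y hy, smul_dotProduct, smul_eq_mul, dotProduct_comm (n 1), hv2 y hy, mul_zero]
  · intro y hy
    rw [hg3 y hy, smul_dotProduct, smul_eq_mul, dotProduct_comm (n 2), hv3 y hy, mul_zero]
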